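/- arXiv:2303.16308 — 3 statements merged into one kernel-verified Lean document; each statement's English description precedes it below -/
import Mathlib

section
/- Let x_1, …, x_t ∈ 𝒳 be a data stream and let x'_1, …, x'_t ∈ 𝒳 be any perturbed stream satisfying the average-perturbation constraint (1/t) Σ_{i=1}^t d(x_i, x'_i) ≤ ε for some ε ≥ 0. Then the overall smoothed performances on the clean and perturbed streams satisfy |Z̃ − Z̃'| ≤ w · ψ(ε). In particular, if Z̃_ε denotes the infimum of Z̃' over all perturbed streams satisfying the constraint, then |Z̃ − Z̃_ε| ≤ w · ψ(ε). -/
open MeasureTheory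

/-- Total variation distance between two measures:
`TV(μ, ν) = sup over measurable sets A of |μ(A) − ν(A)|`. -/
noncomputable def tvDist {X : Type*} [MeasurableSpace X] (μ ν : Measure X) : ℝ :=
  ⨆ A : {A : Set X // MeasurableSet A}, |(μ A.1).toReal - (ν A.1).toReal|

/-- The smoothed performance: the integral of `f` against the product of the smoothing
distributions `S` applied to the entries of the window `W`. -/
noncomputable def smoothed {X : Type*} [MeasurableSpace X] (S : X → Measure X)
    {s : ℕ} (f : (Fin s → X) → ℝ) (W : Fin s → X) : ℝ :=
  ∫ y, f y ∂(Measure.pi fun j => S (W j))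

/-- The sliding window at time step `i` over the stream `x`: with `s = min(i, w)`,
the window is `(x_{i−s+1}, …, x_i)`. -/
def window {X : Type*} (x : ℕ → X) (w i : ℕ) : Fin (min i w) → X :=
  fun j => x (i - min i w + 1 + (j : ℕ))

/-
For a `[0,1]`-valued `g`, the layer-cake formula writes `∫ g dμ - ∫ g dν` as an
average over `s ∈ (0,1]` of `μ {g > s} - ν {g > s}`, so it is at most `TV(μ, ν)`. Replacing the
factors of a product measure one at a time (Fubini) then bounds the change of each smoothed window
term by `∑ ψ(d(x_j, x'_j))` over the window. Every time step lies in at most `w` windows, and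
Jensen's inequality for the concave `ψ`, followed by its monotonicity, bounds the average of
`ψ(d(x_j, x'_j))` by `ψ(ε)`.
-/

open Finset

section Measures

variable {X : Type*} [MeasurableSpace X]

lemma integrable_of_forall_mem_Icc {μ : Measure X} [IsFiniteMeasure μ] {g : X → ℝ}
    (hg : AEStronglyMeasurable g μ) (hg01 : ∀ y, g y ∈ Set.Icc (0 : ℝ) 1) : Integrable g μ :=
  .of_bound hg 1 <| ae_of_all _ fun y => by
    rw [Real.norm_eq_abs, abs_le]
    exact ⟨by linarith [(hg01 y).1], (hg01 y).2⟩

lemma integral_mem_Icc_of_forall_mem_Icc {μ : Measure X} [IsProbabilityMeasure μ] {g : X → ℝ}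
    (hg : AEStronglyMeasurable g μ) (hg01 : ∀ y, g y ∈ Set.Icc (0 : ℝ) 1) :
    ∫ y, g y ∂μ ∈ Set.Icc (0 : ℝ) 1 :=
  ⟨integral_nonneg fun y => (hg01 y).1,
    (integral_mono (integrable_of_forall_mem_Icc hg hg01) (integrable_const 1)
      fun y => (hg01 y).2).trans_eq (by simp)⟩

lemma tvDist_comm (μ ν : Measure X) : tvDist μ ν = tvDist ν μ := by
  simp_rw [tvDist, abs_sub_comm]

lemma measureReal_sub_le_tvDist (μ ν : Measure X) [IsProbabilityMeasure μ]
    [IsProbabilityMeasure ν] {A : Set X} (hA : MeasurableSet A) :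
    μ.real A - ν.real A ≤ tvDist μ ν := by
  have hbdd : BddAbove (Set.range fun B : {A : Set X // MeasurableSet A} =>
      |μ.real B.1 - ν.real B.1|) := by
    refine ⟨1, ?_⟩
    rintro _ ⟨B, rfl⟩
    exact abs_sub_le_of_nonneg_of_le measureReal_nonneg measureReal_le_one
      measureReal_nonneg measureReal_le_one
  exact (le_abs_self _).trans (le_ciSup hbdd ⟨A, hA⟩)

lemma integral_eq_integral_Ioc_measureReal_lt {μ : Measure X} [IsFiniteMeasure μ] {g : X → ℝ}
    (hg : AEStronglyMeasurable g μ) (hg01 : ∀ y, g y ∈ Set.Icc (0 : ℝ) 1) :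
    ∫ y, g y ∂μ = ∫ s in Set.Ioc 0 1, μ.real {y | s < g y} := by
  rw [(integrable_of_forall_mem_Icc hg hg01).integral_eq_integral_meas_lt
    (ae_of_all _ fun y => (hg01 y).1)]
  refine setIntegral_eq_of_subset_of_forall_sdiff_eq_zero measurableSet_Ioi
    Set.Ioc_subset_Ioi_self fun s hs => ?_
  have hs1 : 1 < s := by
    simp only [Set.mem_sdiff, Set.mem_Ioi, Set.mem_Ioc, not_and, not_le] at hs
    exact hs.2 hs.1
  have hempty : {y | s < g y} = ∅ :=
    Set.eq_empty_of_forall_notMem fun y (hy : s < g y) => (hg01 y).2.not_gt (hs1.trans hy)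
  simp [hempty]

lemma integral_sub_integral_le_tvDist (μ ν : Measure X) [IsProbabilityMeasure μ]
    [IsProbabilityMeasure ν] {g : X → ℝ} (hg : Measurable g)
    (hg01 : ∀ y, g y ∈ Set.Icc (0 : ℝ) 1) :
    ∫ y, g y ∂μ - ∫ y, g y ∂ν ≤ tvDist μ ν := by
  have hlevel (s : ℝ) : MeasurableSet {y | s < g y} := measurableSet_lt measurable_const hg
  have hint (ρ : Measure X) [IsProbabilityMeasure ρ] :
      IntegrableOn (fun s => ρ.real {y | s < g y}) (Set.Ioc 0 1) := by
    have hanti : Antitone fun s => ρ.real {y | s < g y} := fun s s' hss' =>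
      measureReal_mono fun y hy => hss'.trans_lt hy
    exact integrable_of_forall_mem_Icc hanti.measurable.aestronglyMeasurable
      fun s => ⟨measureReal_nonneg, measureReal_le_one⟩
  rw [integral_eq_integral_Ioc_measureReal_lt hg.aestronglyMeasurable hg01,
    integral_eq_integral_Ioc_measureReal_lt hg.aestronglyMeasurable hg01,
    ← integral_sub (hint μ) (hint ν)]
  calc ∫ s in Set.Ioc 0 1, (μ.real {y | s < g y} - ν.real {y | s < g y})
      ≤ ∫ _ in Set.Ioc (0 : ℝ) 1, tvDist μ ν :=
        integral_mono ((hint μ).sub (hint ν)) (integrable_const _)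
          fun s => measureReal_sub_le_tvDist μ ν (hlevel s)
    _ = tvDist μ ν := by simp

lemma abs_integral_sub_integral_le_tvDist (μ ν : Measure X) [IsProbabilityMeasure μ]
    [IsProbabilityMeasure ν] {g : X → ℝ} (hg : Measurable g)
    (hg01 : ∀ y, g y ∈ Set.Icc (0 : ℝ) 1) :
    |∫ y, g y ∂μ - ∫ y, g y ∂ν| ≤ tvDist μ ν :=
  abs_sub_le_iff.2 ⟨integral_sub_integral_le_tvDist μ ν hg hg01,
    tvDist_comm μ ν ▸ integral_sub_integral_le_tvDist ν μ hg hg01⟩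

lemma measurable_fin_cons {n : ℕ} :
    Measurable fun p : X × (Fin n → X) => (Fin.cons p.1 p.2 : Fin (n + 1) → X) :=
  measurable_pi_lambda _ fun i => Fin.cases measurable_fst
    (fun j => (measurable_pi_apply j).comp measurable_snd) i

lemma integral_pi_fin_succ {n : ℕ} (μ : Fin (n + 1) → Measure X) [∀ i, SigmaFinite (μ i)]
    {f : (Fin (n + 1) → X) → ℝ} (hf : Integrable f (Measure.pi μ)) :
    ∫ y, f y ∂Measure.pi μ =
      ∫ a, ∫ z, f (Fin.cons a z) ∂Measure.pi (fun j => μ j.succ) ∂μ 0 := by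
  have hmp := (measurePreserving_piFinSuccAbove μ 0).symm
  have hint := (hmp.integrable_comp_emb (MeasurableEquiv.measurableEmbedding _)).2 hf
  rw [← hmp.integral_comp']
  refine (integral_prod _ hint).trans ?_
  simp [MeasurableEquiv.piFinSuccAbove_symm_apply, Fin.insertNthEquiv]

lemma abs_integral_pi_sub_integral_pi_le_sum_tvDist {n : ℕ} (μ ν : Fin n → Measure X)
    [∀ i, IsProbabilityMeasure (μ i)] [∀ i, IsProbabilityMeasure (ν i)]
    {f : (Fin n → X) → ℝ} (hf : Measurable f) (hf01 : ∀ y, f y ∈ Set.Icc (0 : ℝ) 1) :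
    |∫ y, f y ∂Measure.pi μ - ∫ y, f y ∂Measure.pi ν| ≤ ∑ j, tvDist (μ j) (ν j) := by
  induction n with
  | zero => simp [Measure.pi_of_empty μ, Measure.pi_of_empty ν]
  | succ n ih =>
    have hfcons : Measurable fun p : X × (Fin n → X) => f (Fin.cons p.1 p.2) :=
      hf.comp measurable_fin_cons
    set G : (Fin n → Measure X) → X → ℝ := fun ρ a => ∫ z, f (Fin.cons a z) ∂Measure.pi ρ
    have hGmeas (ρ : Fin n → Measure X) [∀ i, IsProbabilityMeasure (ρ i)] : Measurable (G ρ) :=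
      hfcons.stronglyMeasurable.integral_prod_right'.measurable
    have hG01 (ρ : Fin n → Measure X) [∀ i, IsProbabilityMeasure (ρ i)] (a : X) :
        G ρ a ∈ Set.Icc (0 : ℝ) 1 :=
      integral_mem_Icc_of_forall_mem_Icc (hfcons.comp measurable_prodMk_left).aestronglyMeasurable
        fun z => hf01 _
    have hGint (ρ : Fin n → Measure X) [∀ i, IsProbabilityMeasure (ρ i)] (ρ₀ : Measure X)
        [IsProbabilityMeasure ρ₀] : Integrable (G ρ) ρ₀ :=
      integrable_of_forall_mem_Icc (hGmeas ρ).aestronglyMeasurable (hG01 ρ)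
    have hint (ρ : Fin (n + 1) → Measure X) [∀ i, IsProbabilityMeasure (ρ i)] :
        Integrable f (Measure.pi ρ) :=
      integrable_of_forall_mem_Icc hf.aestronglyMeasurable hf01
    set μ' : Fin n → Measure X := fun j => μ j.succ
    set ν' : Fin n → Measure X := fun j => ν j.succ
    have hinner : |∫ a, G μ' a ∂ν 0 - ∫ a, G ν' a ∂ν 0| ≤ ∑ j, tvDist (μ' j) (ν' j) := by
      have hpoint (a : X) : ‖G μ' a - G ν' a‖ ≤ ∑ j, tvDist (μ' j) (ν' j) :=
        ih μ' ν' (f := fun z => f (Fin.cons a z)) (hfcons.comp measurable_prodMk_left)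
          fun z => hf01 _
      rw [← integral_sub (hGint μ' (ν 0)) (hGint ν' (ν 0))]
      simpa using norm_integral_le_of_norm_le_const (μ := ν 0) (ae_of_all _ hpoint)
    rw [integral_pi_fin_succ μ (hint μ), integral_pi_fin_succ ν (hint ν), Fin.sum_univ_succ]
    calc |∫ a, G μ' a ∂μ 0 - ∫ a, G ν' a ∂ν 0|
        ≤ |∫ a, G μ' a ∂μ 0 - ∫ a, G μ' a ∂ν 0| + |∫ a, G μ' a ∂ν 0 - ∫ a, G ν' a ∂ν 0| :=
          abs_sub_le _ _ _
      _ ≤ tvDist (μ 0) (ν 0) + ∑ j, tvDist (μ' j) (ν' j) :=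
          add_le_add (abs_integral_sub_integral_le_tvDist _ _ (hGmeas μ') (hG01 μ')) hinner

end Measures

lemma sum_window_eq_sum_Ioc {X M : Type*} [AddCommMonoid M] (G : X → X → M) (x x' : ℕ → X)
    (w i : ℕ) :
    ∑ j, G (window x w i j) (window x' w i j) = ∑ k ∈ Ioc (i - min i w) i, G (x k) (x' k) := by
  refine (Fin.sum_univ_eq_sum_range
    (fun j => G (x (i - min i w + 1 + j)) (x' (i - min i w + 1 + j))) _).trans ?_
  rw [← Ico_add_one_add_one_eq_Ioc, sum_Ico_eq_sum_range]
  congr 2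
  omega

lemma sum_sum_Ioc_window_le {g : ℕ → ℝ} {t : ℕ} (hg : ∀ k ∈ Icc 1 t, 0 ≤ g k) (w : ℕ) :
    ∑ i ∈ Icc 1 t, ∑ k ∈ Ioc (i - min i w) i, g k ≤ w * ∑ k ∈ Icc 1 t, g k := by
  rw [sum_comm' (t' := Icc 1 t) (s' := fun k => (Icc 1 t).filter fun i => k ∈ Ioc (i - min i w) i)
    (fun i k => by simp only [mem_Icc, mem_Ioc, mem_filter]; omega), mul_sum]
  refine sum_le_sum fun k hk => ?_
  rw [sum_const, nsmul_eq_mul]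
  refine mul_le_mul_of_nonneg_right ?_ (hg k hk)
  have hcard : #((Icc 1 t).filter fun i => k ∈ Ioc (i - min i w) i) ≤ #(Ico k (k + w)) :=
    card_le_card fun i hi => by simp only [mem_Icc, mem_Ioc, mem_filter, mem_Ico] at hi ⊢; omega
  exact_mod_cast hcard.trans (by simp)

lemma ConcaveOn.sum_le_card_mul_of_avg_le {ι : Type*} {ψ : ℝ → ℝ}
    (hconc : ConcaveOn ℝ (Set.Ici 0) ψ) (hmono : MonotoneOn ψ (Set.Ici 0)) (s : Finset ι)
    {p : ι → ℝ} (hp : ∀ i ∈ s, 0 ≤ p i) {ε : ℝ} (hε : 0 ≤ ε) (havg : (∑ i ∈ s, p i) / #s ≤ ε) :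
    ∑ i ∈ s, ψ (p i) ≤ #s * ψ ε := by
  rcases s.eq_empty_or_nonempty with rfl | hs
  · simp
  have hcard : (0 : ℝ) < #s := by exact_mod_cast hs.card_pos
  have hjensen := hconc.le_map_sum (t := s) (w := fun _ => (#s : ℝ)⁻¹) (p := p)
    (fun _ _ => by positivity) (by simp [hcard.ne']) hp
  simp only [smul_eq_mul, ← mul_sum] at hjensen
  rw [inv_mul_eq_div, inv_mul_eq_div] at hjensen
  have hmean_nonneg : 0 ≤ (∑ i ∈ s, p i) / #s := div_nonneg (sum_nonneg hp) hcard.le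
  rw [← div_le_iff₀' hcard]
  exact hjensen.trans (hmono hmean_nonneg hε havg)

theorem performance_bound_general {X : Type*} [MeasurableSpace X]
    (S : X → Measure X) (hS : ∀ x, IsProbabilityMeasure (S x))
    (d : X → X → ℝ) (hd : ∀ a b, 0 ≤ d a b)
    (ψ : ℝ → ℝ) (hψ01 : ∀ a, 0 ≤ a → ψ a ∈ Set.Icc (0 : ℝ) 1)
    (hψconc : ConcaveOn ℝ (Set.Ici 0) ψ)
    (hψmono : MonotoneOn ψ (Set.Ici 0))
    (hTV : ∀ a b : X, tvDist (S a) (S b) ≤ ψ (d a b))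
    (w t : ℕ)
    (f : (i : ℕ) → (Fin (min i w) → X) → ℝ)
    (hf : ∀ i, Measurable (f i))
    (hf01 : ∀ i y, f i y ∈ Set.Icc (0 : ℝ) 1)
    (x x' : ℕ → X) (ε : ℝ) (hε : 0 ≤ ε)
    (hconstraint : (∑ i ∈ Finset.Icc 1 t, d (x i) (x' i)) / (t : ℝ) ≤ ε) :
    |(∑ i ∈ Finset.Icc 1 t, smoothed S (f i) (window x w i)) / (t : ℝ) -
        (∑ i ∈ Finset.Icc 1 t, smoothed S (f i) (window x' w i)) / (t : ℝ)| ≤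
      (w : ℝ) * ψ ε := by
  set g : ℕ → ℝ := fun k => ψ (d (x k) (x' k))
  have hg (k : ℕ) : 0 ≤ g k := (hψ01 _ (hd _ _)).1
  have hwindow (i : ℕ) :
      |smoothed S (f i) (window x w i) - smoothed S (f i) (window x' w i)| ≤
        ∑ k ∈ Ioc (i - min i w) i, g k :=
    (abs_integral_pi_sub_integral_pi_le_sum_tvDist _ _ (hf i) (hf01 i)).trans <|
      (sum_le_sum fun j _ => hTV _ _).trans_eq
        (sum_window_eq_sum_Ioc (fun a b => ψ (d a b)) x x' w i)
  have hjensen : ∑ k ∈ Icc 1 t, g k ≤ t * ψ ε := by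
    simpa using hψconc.sum_le_card_mul_of_avg_le hψmono (Icc 1 t) (fun k _ => hd _ _) hε
      (by simpa using hconstraint)
  rw [div_sub_div_same, ← sum_sub_distrib, abs_div, Nat.abs_cast]
  refine div_le_of_le_mul₀ t.cast_nonneg (mul_nonneg w.cast_nonneg (hψ01 ε hε).1) ?_
  calc |∑ i ∈ Icc 1 t, (smoothed S (f i) (window x w i) - smoothed S (f i) (window x' w i))|
      ≤ ∑ i ∈ Icc 1 t, ∑ k ∈ Ioc (i - min i w) i, g k :=
        (abs_sum_le_sum_abs _ _).trans (sum_le_sum fun i _ => hwindow i)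
    _ ≤ w * ∑ k ∈ Icc 1 t, g k := sum_sum_Ioc_window_le (fun k _ => hg k) w
    _ ≤ w * (t * ψ ε) := by gcongr
    _ = w * ψ ε * t := by ring

/-- Theorem 1 of the paper: if the average perturbation size over the stream
is at most `ε`, then `|Z̃ − Z̃'| ≤ w · ψ(ε)`.  Since this holds for every perturbed stream
satisfying the constraint, it holds in particular for the infimum `Z̃_ε`. -/
theorem performance_bound {X : Type*} [MeasurableSpace X]
    (S : X → Measure X) (hS : ∀ x, IsProbabilityMeasure (S x))
    (d : X → X → ℝ) (hd : ∀ a b, 0 ≤ d a b)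
    (ψ : ℝ → ℝ) (hψ01 : ∀ a, 0 ≤ a → ψ a ∈ Set.Icc (0 : ℝ) 1)
    (hψconc : ConcaveOn ℝ (Set.Ici 0) ψ)
    (hψmono : MonotoneOn ψ (Set.Ici 0))
    (hTV : ∀ a b : X, tvDist (S a) (S b) ≤ ψ (d a b))
    (w t : ℕ) (hw : 1 ≤ w) (ht : 1 ≤ t)
    (f : (i : ℕ) → (Fin (min i w) → X) → ℝ)
    (hf : ∀ i, Measurable (f i))
    (hf01 : ∀ i y, f i y ∈ Set.Icc (0 : ℝ) 1)
    (x x' : ℕ → X) (ε : ℝ) (hε : 0 ≤ ε)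
    (hconstraint : (∑ i ∈ Finset.Icc 1 t, d (x i) (x' i)) / (t : ℝ) ≤ ε) :
    |(∑ i ∈ Finset.Icc 1 t, smoothed S (f i) (window x w i)) / (t : ℝ) -
        (∑ i ∈ Finset.Icc 1 t, smoothed S (f i) (window x' w i)) / (t : ℝ)| ≤
      (w : ℝ) * ψ ε :=
  performance_bound_general S hS d hd ψ hψ01 hψconc hψmono hTV w t f hf hf01 x x' ε hε hconstraint
end

section
/- Let x_1, …, x_t ∈ 𝒳 be a data stream and let x'_1, …, x'_t ∈ 𝒳 be any perturbed stream. Then, without any constraint on the perturbation sizes and without assuming ψ is concave or monotone, the overall smoothed performances satisfy |Z̃ − Z̃'| ≤ (w/t) · Σ_{i=1}^t ψ(d(x_i, x'_i)). -/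
open MeasureTheory

/-!
For a `[0, 1]`-valued function, the layer-cake formula writes `∫ f ∂μ - ∫ f ∂ν` as the integral
over `t ∈ (0, 1]` of `μ {t < f} - ν {t < f}`, so it is at most `TV(μ, ν)`. Swapping the factors
of a product measure one at a time (a hybrid argument) then bounds the change of a smoothed
window performance by the sum of the TV distances of the smoothing distributions over the window,
hence by `∑ ψ (d (x j) (x' j))` over the window. Every time step lies in at most `w` windows, which
produces the factor `w`.
-/

open Set

lemma abs_measure_sub_le_tvDist {X : Type*} [MeasurableSpace X] (μ ν : Measure X)
    [IsProbabilityMeasure μ] [IsProbabilityMeasure ν] {A : Set X} (hA : MeasurableSet A) :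
    |(μ A).toReal - (ν A).toReal| ≤ tvDist μ ν := by
  refine le_ciSup (f := fun A : {A : Set X // MeasurableSet A} =>
    |(μ A.1).toReal - (ν A.1).toReal|) ⟨1, ?_⟩ ⟨A, hA⟩
  rintro _ ⟨B, rfl⟩
  exact abs_sub_le_of_nonneg_of_le ENNReal.toReal_nonneg measureReal_le_one
    ENNReal.toReal_nonneg measureReal_le_one

lemma tvDist_nonneg {X : Type*} [MeasurableSpace X] (μ ν : Measure X)
    [IsProbabilityMeasure μ] [IsProbabilityMeasure ν] : 0 ≤ tvDist μ ν :=
  (abs_nonneg _).trans (abs_measure_sub_le_tvDist μ ν MeasurableSet.empty)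

section UnitInterval

variable {α : Type*} [MeasurableSpace α] {f : α → ℝ}

lemma integrable_of_mem_Icc_zero_one (μ : Measure α) [IsFiniteMeasure μ]
    (hf : AEStronglyMeasurable f μ) (h01 : ∀ a, f a ∈ Icc (0 : ℝ) 1) : Integrable f μ :=
  .of_bound hf 1 (.of_forall fun a => by
    rw [Real.norm_eq_abs, abs_of_nonneg (h01 a).1]; exact (h01 a).2)

lemma integral_mem_Icc_zero_one (μ : Measure α) [IsProbabilityMeasure μ]
    (h01 : ∀ a, f a ∈ Icc (0 : ℝ) 1) : ∫ a, f a ∂μ ∈ Icc (0 : ℝ) 1 :=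
  ⟨integral_nonneg fun a => (h01 a).1, by
    simpa using integral_mono_of_nonneg (μ := μ) (.of_forall fun a => (h01 a).1)
      (integrable_const 1) (.of_forall fun a => (h01 a).2)⟩

lemma integral_eq_setIntegral_Ioc_measureReal_lt (μ : Measure α) [IsFiniteMeasure μ]
    (hf : Measurable f) (h01 : ∀ a, f a ∈ Icc (0 : ℝ) 1) :
    ∫ a, f a ∂μ = ∫ t in Ioc 0 1, μ.real {a | t < f a} := by
  rw [(integrable_of_mem_Icc_zero_one μ hf.aestronglyMeasurable h01).integral_eq_integral_meas_lt
    (.of_forall fun a => (h01 a).1)]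
  refine setIntegral_eq_of_subset_of_forall_sdiff_eq_zero measurableSet_Ioi Ioc_subset_Ioi_self
    fun t ht => ?_
  have ht1 : 1 < t := not_le.1 fun h => ht.2 ⟨ht.1, h⟩
  have : {a | t < f a} = ∅ := eq_empty_of_forall_notMem fun a ha => by
    linarith [(h01 a).2, show t < f a from ha]
  simp [this]

lemma abs_integral_sub_le_tvDist (μ ν : Measure α) [IsProbabilityMeasure μ]
    [IsProbabilityMeasure ν] (hf : Measurable f) (h01 : ∀ a, f a ∈ Icc (0 : ℝ) 1) :
    |∫ a, f a ∂μ - ∫ a, f a ∂ν| ≤ tvDist μ ν := by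
  have hint : ∀ (ρ : Measure α) [IsFiniteMeasure ρ],
      IntegrableOn (fun t => ρ.real {a | t < f a}) (Ioc 0 1) := by
    intro ρ _
    have hanti : Antitone fun t : ℝ => ρ.real {a | t < f a} := fun s t hst =>
      measureReal_mono (fun a (ha : t < f a) => hst.trans_lt ha)
    exact (hanti.locallyIntegrable.integrableOn_isCompact isCompact_Icc).mono_set
      Ioc_subset_Icc_self
  rw [integral_eq_setIntegral_Ioc_measureReal_lt μ hf h01,
    integral_eq_setIntegral_Ioc_measureReal_lt ν hf h01, ← integral_sub (hint μ) (hint ν)]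
  simpa using norm_setIntegral_le_of_norm_le_const
    (f := fun t => μ.real {a | t < f a} - ν.real {a | t < f a}) (C := tvDist μ ν)
    (measure_Ioc_lt_top (μ := volume) (a := 0) (b := (1 : ℝ)))
    fun t _ => abs_measure_sub_le_tvDist μ ν (hf measurableSet_Ioi)

end UnitInterval

lemma abs_integral_prod_sub_le {α β : Type*} [MeasurableSpace α] [MeasurableSpace β]
    (μ ν : Measure α) [IsProbabilityMeasure μ] [IsProbabilityMeasure ν]
    (μ' ν' : Measure β) [IsProbabilityMeasure μ'] [IsProbabilityMeasure ν']
    {g : α × β → ℝ} (hg : Measurable g) (h01 : ∀ p, g p ∈ Icc (0 : ℝ) 1) {c : ℝ}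
    (hc : ∀ a, |∫ b, g (a, b) ∂μ' - ∫ b, g (a, b) ∂ν'| ≤ c) :
    |∫ p, g p ∂(μ.prod μ') - ∫ p, g p ∂(ν.prod ν')| ≤ tvDist μ ν + c := by
  have hsection : ∀ (ρ : Measure β) [IsProbabilityMeasure ρ],
      Measurable (fun a => ∫ b, g (a, b) ∂ρ) ∧ ∀ a, ∫ b, g (a, b) ∂ρ ∈ Icc (0 : ℝ) 1 :=
    fun ρ _ => ⟨hg.stronglyMeasurable.integral_prod_right'.measurable,
      fun a => integral_mem_Icc_zero_one ρ fun b => h01 (a, b)⟩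
  obtain ⟨hμ'_meas, hμ'_01⟩ := hsection μ'
  obtain ⟨hν'_meas, hν'_01⟩ := hsection ν'
  have hint : ∀ (ρ : Measure α) [IsProbabilityMeasure ρ] (ρ' : Measure β)
      [IsProbabilityMeasure ρ'], Integrable g (ρ.prod ρ') :=
    fun _ _ _ _ => integrable_of_mem_Icc_zero_one _ hg.aestronglyMeasurable h01
  rw [integral_prod g (hint μ μ'), integral_prod g (hint ν ν')]
  have hfirst := abs_integral_sub_le_tvDist μ ν hμ'_meas hμ'_01
  have hsecond : |∫ a, ∫ b, g (a, b) ∂μ' ∂ν - ∫ a, ∫ b, g (a, b) ∂ν' ∂ν| ≤ c := by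
    rw [← integral_sub (integrable_of_mem_Icc_zero_one ν hμ'_meas.aestronglyMeasurable hμ'_01)
      (integrable_of_mem_Icc_zero_one ν hν'_meas.aestronglyMeasurable hν'_01)]
    simpa using norm_integral_le_of_norm_le_const (μ := ν)
      (.of_forall fun a => (Real.norm_eq_abs _).trans_le (hc a))
  calc _ ≤ |∫ a, ∫ b, g (a, b) ∂μ' ∂μ - ∫ a, ∫ b, g (a, b) ∂μ' ∂ν|
        + |∫ a, ∫ b, g (a, b) ∂μ' ∂ν - ∫ a, ∫ b, g (a, b) ∂ν' ∂ν| := abs_sub_le _ _ _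
    _ ≤ tvDist μ ν + c := add_le_add hfirst hsecond

lemma abs_integral_pi_sub_le_sum_tvDist {s : ℕ} {α : Fin s → Type*} [∀ j, MeasurableSpace (α j)]
    (μ ν : ∀ j, Measure (α j)) [∀ j, IsProbabilityMeasure (μ j)] [∀ j, IsProbabilityMeasure (ν j)]
    {f : (∀ j, α j) → ℝ} (hf : Measurable f) (h01 : ∀ y, f y ∈ Icc (0 : ℝ) 1) :
    |∫ y, f y ∂(Measure.pi μ) - ∫ y, f y ∂(Measure.pi ν)| ≤ ∑ j, tvDist (μ j) (ν j) := by
  induction s with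
  | zero =>
    rw [Measure.pi_of_empty, Measure.pi_of_empty, integral_dirac' f _ hf.stronglyMeasurable]
    simp
  | succ s ih =>
    set e := MeasurableEquiv.piFinSuccAbove α 0
    have hsplit : ∀ (ρ : ∀ j, Measure (α j)) [∀ j, IsProbabilityMeasure (ρ j)],
        ∫ y, f y ∂(Measure.pi ρ) =
          ∫ p, f (e.symm p) ∂((ρ 0).prod (Measure.pi fun j => ρ ((0 : Fin (s + 1)).succAbove j))) :=
      fun ρ _ => by
        rw [← (measurePreserving_piFinSuccAbove ρ 0).integral_comp' fun p => f (e.symm p)]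
        simp only [e, MeasurableEquiv.symm_apply_apply]
    rw [hsplit μ, hsplit ν, Fin.sum_univ_succAbove _ 0]
    exact abs_integral_prod_sub_le _ _ _ _ (hf.comp e.symm.measurable) (fun p => h01 _)
      fun a => ih _ _ (hf.comp (e.symm.measurable.comp measurable_prodMk_left)) fun _ => h01 _

lemma abs_smoothed_sub_le_sum_tvDist {X : Type*} [MeasurableSpace X] (S : X → Measure X)
    [∀ x, IsProbabilityMeasure (S x)] {s : ℕ} {f : (Fin s → X) → ℝ} (hf : Measurable f)
    (h01 : ∀ y, f y ∈ Icc (0 : ℝ) 1) (W W' : Fin s → X) :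
    |smoothed S f W - smoothed S f W'| ≤ ∑ j, tvDist (S (W j)) (S (W' j)) :=
  abs_integral_pi_sub_le_sum_tvDist _ _ hf h01

/-- Each time step `k` lies in at most `w` of the windows. -/
lemma sum_sum_window_le (g : ℕ → ℝ) (hg : ∀ k, 0 ≤ g k) (w t : ℕ) :
    ∑ i ∈ Finset.Icc 1 t, ∑ j, g (window id w i j) ≤ w * ∑ k ∈ Finset.Icc 1 t, g k := by
  have hwindow : ∀ i ∈ Finset.Icc 1 t,
      ∑ j, g (window id w i j) = ∑ k ∈ Finset.Ico (i - min i w + 1) (i + 1), g k := by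
    intro i _
    rw [Finset.sum_Ico_eq_sum_range, show i + 1 - (i - min i w + 1) = min i w by omega]
    exact Fin.sum_univ_eq_sum_range (fun j => g (i - min i w + 1 + j)) _
  rw [Finset.sum_congr rfl hwindow, Finset.sum_comm' (t' := Finset.Icc 1 t)
    (s' := fun k => {i ∈ Finset.Icc 1 t | k ∈ Finset.Ico (i - min i w + 1) (i + 1)})
    (fun i k => by simp only [Finset.mem_filter, Finset.mem_Icc, Finset.mem_Ico]; omega),
    Finset.mul_sum]
  refine Finset.sum_le_sum fun k _ => ?_
  rw [Finset.sum_const, nsmul_eq_mul]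
  have hcard : {i ∈ Finset.Icc 1 t | k ∈ Finset.Ico (i - min i w + 1) (i + 1)}.card ≤ w :=
    calc _ ≤ (Finset.Ico k (k + w)).card := Finset.card_le_card fun i hi => by
          simp only [Finset.mem_filter, Finset.mem_Icc, Finset.mem_Ico] at hi ⊢; omega
      _ = w := by simp
  exact mul_le_mul_of_nonneg_right (by exact_mod_cast hcard) (hg k)

theorem performance_bound_unconstrained_general {X : Type*} [MeasurableSpace X]
    (S : X → Measure X) (hS : ∀ x, IsProbabilityMeasure (S x))
    (d : X → X → ℝ)
    (ψ : ℝ → ℝ)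
    (hTV : ∀ a b : X, tvDist (S a) (S b) ≤ ψ (d a b))
    (w t : ℕ)
    (f : (i : ℕ) → (Fin (min i w) → X) → ℝ)
    (hf : ∀ i, Measurable (f i))
    (hf01 : ∀ i y, f i y ∈ Set.Icc (0 : ℝ) 1)
    (x x' : ℕ → X) :
    |(∑ i ∈ Finset.Icc 1 t, smoothed S (f i) (window x w i)) / (t : ℝ) -
        (∑ i ∈ Finset.Icc 1 t, smoothed S (f i) (window x' w i)) / (t : ℝ)| ≤
      ((w : ℝ) / (t : ℝ)) * ∑ i ∈ Finset.Icc 1 t, ψ (d (x i) (x' i)) := by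
  let tv : ℕ → ℝ := fun k => tvDist (S (x k)) (S (x' k))
  calc _ = |∑ i ∈ Finset.Icc 1 t,
        (smoothed S (f i) (window x w i) - smoothed S (f i) (window x' w i))| / t := by
        rw [div_sub_div_same, ← Finset.sum_sub_distrib, abs_div, Nat.abs_cast]
    _ ≤ (∑ i ∈ Finset.Icc 1 t, ∑ j, tv (window id w i j)) / t := by
        gcongr
        exact (Finset.abs_sum_le_sum_abs _ _).trans <| Finset.sum_le_sum fun i _ =>
          abs_smoothed_sub_le_sum_tvDist S (hf i) (hf01 i) _ _
    _ ≤ (w * ∑ k ∈ Finset.Icc 1 t, tv k) / t := by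
        gcongr
        exact sum_sum_window_le tv (fun k => tvDist_nonneg _ _) w t
    _ ≤ (w * ∑ k ∈ Finset.Icc 1 t, ψ (d (x k) (x' k))) / t := by
        gcongr with k
        exact hTV _ _
    _ = _ := by ring

/-- without any constraint on the perturbation sizes and without assuming `ψ`
is concave or monotone, `|Z̃ − Z̃'| ≤ (w/t) · ∑_{i=1}^t ψ(d(x_i, x'_i))`. -/
theorem performance_bound_unconstrained {X : Type*} [MeasurableSpace X]
    (S : X → Measure X) (hS : ∀ x, IsProbabilityMeasure (S x))
    (d : X → X → ℝ) (hd : ∀ a b, 0 ≤ d a b)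
    (ψ : ℝ → ℝ) (hψ01 : ∀ a, 0 ≤ a → ψ a ∈ Set.Icc (0 : ℝ) 1)
    (hTV : ∀ a b : X, tvDist (S a) (S b) ≤ ψ (d a b))
    (w t : ℕ) (hw : 1 ≤ w) (ht : 1 ≤ t)
    (f : (i : ℕ) → (Fin (min i w) → X) → ℝ)
    (hf : ∀ i, Measurable (f i))
    (hf01 : ∀ i y, f i y ∈ Set.Icc (0 : ℝ) 1)
    (x x' : ℕ → X) :
    |(∑ i ∈ Finset.Icc 1 t, smoothed S (f i) (window x w i)) / (t : ℝ) -
        (∑ i ∈ Finset.Icc 1 t, smoothed S (f i) (window x' w i)) / (t : ℝ)| ≤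
      ((w : ℝ) / (t : ℝ)) * ∑ i ∈ Finset.Icc 1 t, ψ (d (x i) (x' i)) :=
  performance_bound_unconstrained_general S hS d ψ hTV w t f hf hf01 x x'
end

section
/- Let n ≥ 1, σ > 0, and x, x' ∈ ℝⁿ. Let N(x, σ²I) denote the isotropic Gaussian measure on ℝⁿ, i.e., the product over coordinates j = 1,…,n of the one-dimensional Gaussian measures N(x_j, σ²). Then the total variation distance between N(x, σ²I) and N(x', σ²I) equals 2·Φ(‖x − x'‖₂/(2σ)) − 1, where ‖·‖₂ is the Euclidean norm and Φ is the standard normal cumulative distribution function. Equivalently, it equals erf(‖x − x'‖₂/(2√2·σ)). -/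
open MeasureTheory ProbabilityTheory

/-- The standard normal cumulative distribution function `Φ(a) = N(0,1)((−∞, a])`. -/
noncomputable def stdNormalCDF (a : ℝ) : ℝ :=
  ((gaussianReal 0 1) (Set.Iic a)).toReal

/-- The Gauss error function `erf(z) = (2/√π) ∫_0^z e^{−u²} du`. -/
noncomputable def erf (z : ℝ) : ℝ :=
  (2 / Real.sqrt Real.pi) * ∫ u in (0 : ℝ)..z, Real.exp (-u ^ 2)

/-- The isotropic Gaussian measure `N(x, σ²I)` on `ℝⁿ`: the product over coordinates `j` of the
one-dimensional Gaussians `N(x_j, σ²)`. -/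
noncomputable def isoGaussian (n : ℕ) (x : Fin n → ℝ) (σ : ℝ) : Measure (Fin n → ℝ) :=
  Measure.pi fun j => gaussianReal (x j) (Real.toNNReal (σ ^ 2))

/-!
The densities of `N(x, σ²I)` and `N(x', σ²I)` at `y` compare as the distances from `y` to `x`
and to `x'`, so the supremum defining the total variation distance is attained at the half-space
`E` of points closer to `x` than to `x'` (Scheffé). Projecting onto `x - x'` turns both Gaussians
into one-dimensional Gaussians of variance `σ²‖x - x'‖²` whose means lie at `±‖x - x'‖² / 2` from
the bisecting hyperplane, so `E` has masses `Φ(‖x - x'‖ / 2σ)` and `Φ(-‖x - x'‖ / 2σ)`.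
-/

open scoped ENNReal NNReal

section TotalVariation

variable {X : Type*} [MeasurableSpace X] {μ ν : Measure X} {E : Set X}

lemma measureReal_inter_le_of_restrict_le [IsFiniteMeasure ν] (hE : MeasurableSet E)
    (h : μ.restrict E ≤ ν.restrict E) (A : Set X) : μ.real (A ∩ E) ≤ ν.real (A ∩ E) := by
  have hA := Measure.le_iff'.1 h A
  rw [Measure.restrict_apply' hE, Measure.restrict_apply' hE] at hA
  exact ENNReal.toReal_mono (measure_ne_top _ _) hA

lemma restrict_withDensity_mono {P : Measure X} {f g : X → ℝ≥0∞} (hE : MeasurableSet E)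
    (hfg : ∀ x ∈ E, f x ≤ g x) : (P.withDensity f).restrict E ≤ (P.withDensity g).restrict E := by
  rw [restrict_withDensity hE, restrict_withDensity hE]
  exact withDensity_mono (ae_restrict_of_forall_mem hE hfg)

variable [IsProbabilityMeasure μ] [IsProbabilityMeasure ν]

lemma measureReal_sub_le_of_restrict_le (hE : MeasurableSet E)
    (hνμ : ν.restrict E ≤ μ.restrict E) (hμν : μ.restrict Eᶜ ≤ ν.restrict Eᶜ)
    {A : Set X} (hA : MeasurableSet A) : μ.real A - ν.real A ≤ μ.real E - ν.real E := by
  have hAE := measureReal_inter_le_of_restrict_le hE hνμ A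
  have hAEc := measureReal_inter_le_of_restrict_le hE.compl hμν A
  have hAcE := measureReal_inter_le_of_restrict_le hE hνμ Aᶜ
  rw [← Set.sdiff_eq] at hAEc
  rw [Set.inter_comm, ← Set.sdiff_eq] at hAcE
  rw [← measureReal_inter_add_sdiff hE (μ := μ) (s := A),
    ← measureReal_inter_add_sdiff hE (μ := ν) (s := A),
    ← measureReal_inter_add_sdiff hA (μ := μ) (s := E),
    ← measureReal_inter_add_sdiff hA (μ := ν) (s := E), Set.inter_comm E A]
  linarith

lemma tvDist_eq_of_restrict_le (hE : MeasurableSet E)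
    (hνμ : ν.restrict E ≤ μ.restrict E) (hμν : μ.restrict Eᶜ ≤ ν.restrict Eᶜ) :
    tvDist μ ν = μ.real E - ν.real E := by
  have hbound : ∀ A : {A : Set X // MeasurableSet A},
      |μ.real A - ν.real A| ≤ μ.real E - ν.real E := by
    rintro ⟨A, hA⟩
    have hcompl := measureReal_sub_le_of_restrict_le hE hνμ hμν hA.compl
    rw [probReal_compl_eq_one_sub hA, probReal_compl_eq_one_sub hA] at hcompl
    exact abs_le.2 ⟨by linarith, measureReal_sub_le_of_restrict_le hE hνμ hμν hA⟩
  have : Nonempty {A : Set X // MeasurableSet A} := ⟨⟨∅, .empty⟩⟩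
  refine le_antisymm (ciSup_le hbound) ?_
  exact le_ciSup_of_le ⟨_, Set.forall_mem_range.2 hbound⟩ ⟨E, hE⟩ (le_abs_self _)

lemma tvDist_withDensity_eq {P : Measure X} {f g : X → ℝ≥0∞}
    [IsProbabilityMeasure (P.withDensity f)] [IsProbabilityMeasure (P.withDensity g)]
    (hE : MeasurableSet E) (hgf : ∀ x ∈ E, g x ≤ f x) (hfg : ∀ x ∈ Eᶜ, f x ≤ g x) :
    tvDist (P.withDensity f) (P.withDensity g)
      = (P.withDensity f).real E - (P.withDensity g).real E :=
  tvDist_eq_of_restrict_le hE (restrict_withDensity_mono hE hgf)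
    (restrict_withDensity_mono hE.compl hfg)

end TotalVariation

namespace MeasureTheory

theorem lintegral_fin_nat_prod_eq_prod {n : ℕ} {E : Type*}
    [MeasurableSpace E] {μ : Fin n → Measure E} [∀ i, SigmaFinite (μ i)]
    {f : Fin n → E → ℝ≥0∞} (hf : ∀ i, Measurable (f i)) :
    ∫⁻ x, ∏ i, f i (x i) ∂(Measure.pi μ) = ∏ i, ∫⁻ x, f i x ∂(μ i) := by
  induction n with
  | zero => simp
  | succ n ih =>
    rw [← ((measurePreserving_piFinSuccAbove μ 0).symm).lintegral_comp_emb
      (MeasurableEquiv.measurableEmbedding _)]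
    simp only [Fin.zero_succAbove, MeasurableEquiv.piFinSuccAbove_symm_apply,
      Fin.insertNthEquiv_zero, Fin.consEquiv_apply, Fin.prod_univ_succ, Fin.cons_zero,
      Fin.cons_succ]
    rw [lintegral_prod_mul (f := f 0) (g := fun x : Fin n → E => ∏ i, f i.succ (x i))
      (hf 0).aemeasurable
      (Finset.measurable_prod _ fun i _ => (hf i.succ).comp (measurable_pi_apply i)).aemeasurable,
      ih fun i => hf i.succ]

theorem lintegral_fintype_prod_eq_prod {ι : Type*} [Fintype ι] {E : Type*}
    [MeasurableSpace E] {μ : ι → Measure E} [∀ i, SigmaFinite (μ i)]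
    {f : ι → E → ℝ≥0∞} (hf : ∀ i, Measurable (f i)) :
    ∫⁻ x, ∏ i, f i (x i) ∂(Measure.pi μ) = ∏ i, ∫⁻ x, f i x ∂(μ i) := by
  let e := (Fintype.equivFin ι).symm
  rw [← (measurePreserving_piCongrLeft _ e).lintegral_comp_emb
    (MeasurableEquiv.measurableEmbedding _)]
  simp_rw [← e.prod_comp, MeasurableEquiv.coe_piCongrLeft, Equiv.piCongrLeft_apply_apply]
  exact lintegral_fin_nat_prod_eq_prod (μ := fun i => μ (e i)) fun i => hf (e i)

theorem Measure.pi_withDensity {ι : Type*} [Fintype ι] {E : Type*}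
    [MeasurableSpace E] (μ : ι → Measure E) [∀ i, SigmaFinite (μ i)]
    {f : ι → E → ℝ≥0∞} (hf : ∀ i, Measurable (f i))
    [∀ i, SigmaFinite ((μ i).withDensity (f i))] :
    Measure.pi (fun i => (μ i).withDensity (f i))
      = (Measure.pi μ).withDensity (fun x => ∏ i, f i (x i)) := by
  refine Measure.pi_eq fun s hs => ?_
  rw [withDensity_apply _ (.univ_pi hs), ← lintegral_indicator (.univ_pi hs)]
  simp_rw [withDensity_apply _ (hs _), ← lintegral_indicator (hs _)]
  rw [← lintegral_fintype_prod_eq_prod (μ := μ) fun i => (hf i).indicator (hs i)]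
  congr 1
  ext x
  by_cases hx : x ∈ Set.univ.pi s
  · simp_all [Set.indicator_of_mem]
  · obtain ⟨i, -, hi⟩ := not_forall₂.1 hx
    simp [Set.indicator_of_notMem hx, Finset.prod_eq_zero (Finset.mem_univ i),
      Set.indicator_of_notMem hi]

end MeasureTheory

namespace ProbabilityTheory

variable {ι : Type*} [Fintype ι]

lemma map_pi_gaussianReal_sum (m : ι → ℝ) (v : ι → ℝ≥0) :
    (Measure.pi fun i => gaussianReal (m i) (v i)).map (fun y => ∑ i, y i)
      = gaussianReal (∑ i, m i) (∑ i, v i) := by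
  refine Measure.ext_of_charFun ?_
  rw [charFun_map_sum_pi_eq_prod]
  ext t
  simp only [Finset.prod_apply, charFun_gaussianReal, ← Complex.exp_sum]
  push_cast
  rw [Finset.sum_sub_distrib]
  simp [Finset.mul_sum, Finset.sum_mul, Finset.sum_div]

lemma gaussianReal_map_affine (m c b : ℝ) (v : ℝ≥0) :
    (gaussianReal m v).map (fun y => c * (y - b))
      = gaussianReal (c * (m - b)) ((c ^ 2).toNNReal * v) := by
  have hsplit : (fun y => c * (y - b)) = (c * ·) ∘ (· - b) := rfl
  rw [hsplit, ← Measure.map_map (by fun_prop) (by fun_prop), gaussianReal_map_sub_const,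
    gaussianReal_map_const_mul, Real.toNNReal_of_nonneg (sq_nonneg c)]

lemma map_pi_gaussianReal_affine (m c b : ι → ℝ) (v : ι → ℝ≥0) :
    (Measure.pi fun i => gaussianReal (m i) (v i)).map (fun y => ∑ i, c i * (y i - b i))
      = gaussianReal (∑ i, c i * (m i - b i)) (∑ i, (c i ^ 2).toNNReal * v i) := by
  have hsplit : (fun y : ι → ℝ => ∑ i, c i * (y i - b i))
      = (fun y => ∑ i, y i) ∘ (fun y i => c i * (y i - b i)) := rfl
  have : ∀ i, SigmaFinite ((gaussianReal (m i) (v i)).map fun y => c i * (y - b i)) := by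
    intro i
    rw [gaussianReal_map_affine]
    infer_instance
  rw [hsplit, ← Measure.map_map (by fun_prop) (by fun_prop),
    Measure.pi_map_pi (f := fun i y => c i * (y - b i)) fun i => by fun_prop]
  simp_rw [gaussianReal_map_affine]
  exact map_pi_gaussianReal_sum _ _

lemma prod_gaussianPDFReal (m y : ι → ℝ) (v : ℝ≥0) :
    ∏ i, gaussianPDFReal (m i) v (y i)
      = (√(2 * Real.pi * v))⁻¹ ^ Fintype.card ι
        * Real.exp (-(∑ i, (y i - m i) ^ 2) / (2 * v)) := by
  simp only [gaussianPDFReal, Finset.prod_mul_distrib, Finset.prod_const, Finset.card_univ,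
    ← Real.exp_sum, ← Finset.sum_div, Finset.sum_neg_distrib]

lemma prod_gaussianPDF_le_prod_gaussianPDF_iff {v : ℝ≥0} (hv : v ≠ 0) (a b y : ι → ℝ) :
    ∏ i, gaussianPDF (b i) v (y i) ≤ ∏ i, gaussianPDF (a i) v (y i)
      ↔ ∑ i, (y i - a i) ^ 2 ≤ ∑ i, (y i - b i) ^ 2 := by
  have hv' : (0 : ℝ) < v := by positivity
  simp only [gaussianPDF, ← ENNReal.ofReal_prod_of_nonneg fun i _ => gaussianPDFReal_nonneg _ _ _]
  rw [ENNReal.ofReal_le_ofReal_iff (Finset.prod_nonneg fun i _ => gaussianPDFReal_nonneg _ _ _),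
    prod_gaussianPDFReal, prod_gaussianPDFReal, mul_le_mul_iff_right₀ (by positivity),
    Real.exp_le_exp, div_le_div_iff_of_pos_right (by positivity), neg_le_neg_iff]

lemma gaussianReal_real_Ici_zero (μ : ℝ) {w : ℝ≥0} (hw : w ≠ 0) :
    (gaussianReal μ w).real (Set.Ici 0) = stdNormalCDF (μ / √w) := by
  have hw' : 0 < √(w : ℝ) := by positivity
  have hstd : (gaussianReal μ w).map (fun y => (μ - y) / √w) = gaussianReal 0 1 := by
    have hsplit : (fun y => (μ - y) / √w) = (· / √w) ∘ (μ - ·) := rfl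
    rw [hsplit, ← Measure.map_map (by fun_prop) (by fun_prop), gaussianReal_map_const_sub,
      gaussianReal_map_div_const, sub_self, zero_div]
    congr 1
    ext
    simp [Real.sq_sqrt, hw]
  have hpre : (fun y => (μ - y) / √w) ⁻¹' Set.Iic (μ / √w) = Set.Ici 0 := by
    ext y
    simp [div_le_div_iff_of_pos_right hw']
  rw [stdNormalCDF, ← hstd, ← measureReal_def,
    map_measureReal_apply (by fun_prop) measurableSet_Iic, hpre]

end ProbabilityTheory

section StdNormal

lemma stdNormalCDF_neg (a : ℝ) : stdNormalCDF (-a) = 1 - stdNormalCDF a := by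
  have hatom : gaussianReal 0 1 {a} = 0 :=
    gaussianReal_absolutelyContinuous 0 one_ne_zero Real.volume_singleton
  have hneg : (gaussianReal 0 1).map (fun z => -z) = gaussianReal 0 1 := by
    rw [gaussianReal_map_neg, neg_zero]
  rw [stdNormalCDF, stdNormalCDF, ← measureReal_def, ← measureReal_def, ← hneg,
    map_measureReal_apply (by fun_prop) measurableSet_Iic, hneg,
    show (fun z : ℝ => -z) ⁻¹' Set.Iic (-a) = (Set.Iio a)ᶜ by ext; simp,
    probReal_compl_eq_one_sub measurableSet_Iio,
    measureReal_congr (Iio_ae_eq_Iic' hatom)]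

lemma stdNormalCDF_zero : stdNormalCDF 0 = 1 / 2 := by
  have h := stdNormalCDF_neg 0
  rw [neg_zero] at h
  linarith

lemma stdNormalCDF_sub_stdNormalCDF_zero {z : ℝ} (hz : 0 ≤ z) :
    stdNormalCDF z - stdNormalCDF 0 = ∫ u in (0 : ℝ)..z, gaussianPDFReal 0 1 u := by
  rw [stdNormalCDF, stdNormalCDF, ← measureReal_def, ← measureReal_def,
    ← Set.Iic_union_Ioc_eq_Iic hz,
    measureReal_union (Set.Iic_disjoint_Ioc le_rfl) measurableSet_Ioc, add_sub_cancel_left,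
    measureReal_def, gaussianReal_apply_eq_integral 0 one_ne_zero,
    ENNReal.toReal_ofReal
      (setIntegral_nonneg measurableSet_Ioc fun u _ => gaussianPDFReal_nonneg _ _ _),
    intervalIntegral.integral_of_le hz]

lemma integral_gaussianPDFReal_zero_one (z : ℝ) :
    ∫ u in (0 : ℝ)..z, gaussianPDFReal 0 1 u = erf (z / √2) / 2 := by
  have hsqrt2 : (0 : ℝ) < √2 := by positivity
  have hpdf : ∀ u, gaussianPDFReal 0 1 u = (√(2 * Real.pi))⁻¹ * Real.exp (-(u / √2) ^ 2) := by
    intro u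
    rw [gaussianPDFReal, div_pow, Real.sq_sqrt zero_le_two]
    simp only [NNReal.coe_one, mul_one, sub_zero]
    ring_nf
  simp_rw [hpdf]
  rw [intervalIntegral.integral_const_mul,
    intervalIntegral.integral_comp_div (fun t => Real.exp (-t ^ 2)) hsqrt2.ne', zero_div, erf,
    Real.sqrt_mul zero_le_two]
  field_simp
  ring

lemma erf_div_sqrt_two {z : ℝ} (hz : 0 ≤ z) : erf (z / √2) = 2 * stdNormalCDF z - 1 := by
  linarith [stdNormalCDF_sub_stdNormalCDF_zero hz, integral_gaussianPDFReal_zero_one z,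
    stdNormalCDF_zero]

end StdNormal

section SquaredDistance

variable {ι : Type*} [Fintype ι]

lemma sum_sq_sub_sub_sum_sq_sub (x x' y : ι → ℝ) :
    ∑ j, (y j - x' j) ^ 2 - ∑ j, (y j - x j) ^ 2
      = 2 * ∑ j, (x j - x' j) * (y j - (x j + x' j) / 2) := by
  rw [← Finset.sum_sub_distrib, Finset.mul_sum]
  exact Finset.sum_congr rfl fun j _ => by ring

lemma sum_sq_sub_pos {x x' : ι → ℝ} (hxx' : x ≠ x') : 0 < ∑ j, (x j - x' j) ^ 2 := by
  obtain ⟨j, hj⟩ := Function.ne_iff.1 hxx'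
  exact Finset.sum_pos' (fun j _ => sq_nonneg _)
    ⟨j, Finset.mem_univ j, by simpa [sq_pos_iff, sub_eq_zero] using hj⟩

end SquaredDistance

section IsoGaussian

variable {n : ℕ} {σ : ℝ}

lemma isoGaussian_eq_withDensity (hσ : σ ≠ 0) (x : Fin n → ℝ) :
    isoGaussian n x σ
      = volume.withDensity fun y => ∏ j, gaussianPDF (x j) (σ ^ 2).toNNReal (y j) := by
  have hv : (σ ^ 2).toNNReal ≠ 0 := by simpa using hσ
  have : ∀ j, SigmaFinite (volume.withDensity (gaussianPDF (x j) (σ ^ 2).toNNReal)) := by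
    intro j
    rw [← gaussianReal_of_var_ne_zero _ hv]
    infer_instance
  simp_rw [isoGaussian, gaussianReal_of_var_ne_zero _ hv]
  rw [Measure.pi_withDensity _ fun j => measurable_gaussianPDF _ _, volume_pi]

lemma isoGaussian_real_closer (hσ : 0 < σ) {x x' : Fin n → ℝ} (hxx' : x ≠ x') (ξ : Fin n → ℝ) :
    (isoGaussian n ξ σ).real {y | ∑ j, (y j - x j) ^ 2 ≤ ∑ j, (y j - x' j) ^ 2}
      = stdNormalCDF ((∑ j, (x j - x' j) * (ξ j - (x j + x' j) / 2))
          / (σ * √(∑ j, (x j - x' j) ^ 2))) := by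
  have hset : {y : Fin n → ℝ | ∑ j, (y j - x j) ^ 2 ≤ ∑ j, (y j - x' j) ^ 2}
      = (fun y => ∑ j, (x j - x' j) * (y j - (x j + x' j) / 2)) ⁻¹' Set.Ici 0 := by
    ext y
    have := sum_sq_sub_sub_sum_sq_sub x x' y
    simp only [Set.mem_ofPred_eq, Set.mem_preimage, Set.mem_Ici]
    constructor <;> intro h <;> linarith
  have hvar : (↑(∑ j, ((x j - x' j) ^ 2).toNNReal * (σ ^ 2).toNNReal) : ℝ)
      = (∑ j, (x j - x' j) ^ 2) * σ ^ 2 := by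
    push_cast
    rw [Finset.sum_mul]
    exact Finset.sum_congr rfl fun j _ => by
      rw [Real.coe_toNNReal _ (sq_nonneg _), Real.coe_toNNReal _ (sq_nonneg _)]
  have hpos := sum_sq_sub_pos hxx'
  have hw : ∑ j, ((x j - x' j) ^ 2).toNNReal * (σ ^ 2).toNNReal ≠ 0 := by
    rw [← NNReal.coe_ne_zero, hvar]
    positivity
  rw [hset, ← map_measureReal_apply (by fun_prop) measurableSet_Ici, isoGaussian,
    map_pi_gaussianReal_affine, gaussianReal_real_Ici_zero _ hw, hvar,
    Real.sqrt_mul hpos.le, Real.sqrt_sq hσ.le, mul_comm]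

lemma tvDist_isoGaussian_eq_sub (hσ : σ ≠ 0) (x x' : Fin n → ℝ) :
    tvDist (isoGaussian n x σ) (isoGaussian n x' σ)
      = (isoGaussian n x σ).real {y | ∑ j, (y j - x j) ^ 2 ≤ ∑ j, (y j - x' j) ^ 2}
        - (isoGaussian n x' σ).real {y | ∑ j, (y j - x j) ^ 2 ≤ ∑ j, (y j - x' j) ^ 2} := by
  have hv : (σ ^ 2).toNNReal ≠ 0 := by simpa using hσ
  have : ∀ ξ : Fin n → ℝ, IsProbabilityMeasure
      (volume.withDensity fun y : Fin n → ℝ => ∏ j, gaussianPDF (ξ j) (σ ^ 2).toNNReal (y j)) := by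
    intro ξ
    rw [← isoGaussian_eq_withDensity hσ]
    unfold isoGaussian
    infer_instance
  simp only [isoGaussian_eq_withDensity hσ]
  refine tvDist_withDensity_eq (measurableSet_le (by fun_prop) (by fun_prop))
    (fun y hy => (prod_gaussianPDF_le_prod_gaussianPDF_iff hv _ _ _).2 hy)
    (fun y hy => (prod_gaussianPDF_le_prod_gaussianPDF_iff hv _ _ _).2 (le_of_not_ge hy))

end IsoGaussian

theorem tvDist_isoGaussian_general (n : ℕ) (σ : ℝ) (hσ : 0 < σ) (x x' : Fin n → ℝ) :
    tvDist (isoGaussian n x σ) (isoGaussian n x' σ) =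
        2 * stdNormalCDF (Real.sqrt (∑ j, (x j - x' j) ^ 2) / (2 * σ)) - 1 ∧
      tvDist (isoGaussian n x σ) (isoGaussian n x' σ) =
        erf (Real.sqrt (∑ j, (x j - x' j) ^ 2) / (2 * Real.sqrt 2 * σ)) := by
  rcases eq_or_ne x x' with rfl | hxx'
  · have htv : tvDist (isoGaussian n x σ) (isoGaussian n x σ) = 0 := by simp [tvDist]
    simp [htv, stdNormalCDF_zero, erf]
  set S := ∑ j, (x j - x' j) ^ 2
  have hS : 0 < S := sum_sq_sub_pos hxx'
  have hcentre_x : ∑ j, (x j - x' j) * (x j - (x j + x' j) / 2) = S / 2 := by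
    rw [Finset.sum_div]
    exact Finset.sum_congr rfl fun j _ => by ring
  have hcentre_x' : ∑ j, (x j - x' j) * (x' j - (x j + x' j) / 2) = -(S / 2) := by
    rw [Finset.sum_div, ← Finset.sum_neg_distrib]
    exact Finset.sum_congr rfl fun j _ => by ring
  have harg : S / 2 / (σ * √S) = √S / (2 * σ) := by
    nth_rewrite 1 [← Real.sq_sqrt hS.le]
    field_simp
  rw [tvDist_isoGaussian_eq_sub hσ.ne', isoGaussian_real_closer hσ hxx',
    isoGaussian_real_closer hσ hxx', hcentre_x, hcentre_x', neg_div, harg, stdNormalCDF_neg]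
  refine ⟨by ring, ?_⟩
  rw [show √S / (2 * √2 * σ) = √S / (2 * σ) / √2 by ring, erf_div_sqrt_two (by positivity)]
  ring

/-- for `n ≥ 1`, `σ > 0` and `x, x' ∈ ℝⁿ`, the total variation distance between
the isotropic Gaussians `N(x, σ²I)` and `N(x', σ²I)` equals `2·Φ(‖x − x'‖₂/(2σ)) − 1`, or
equivalently `erf(‖x − x'‖₂/(2√2·σ))`, where `‖x − x'‖₂ = √(∑_j (x_j − x'_j)²)`. -/
theorem tvDist_isoGaussian (n : ℕ) (hn : 1 ≤ n) (σ : ℝ) (hσ : 0 < σ) (x x' : Fin n → ℝ) :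
    tvDist (isoGaussian n x σ) (isoGaussian n x' σ) =
        2 * stdNormalCDF (Real.sqrt (∑ j, (x j - x' j) ^ 2) / (2 * σ)) - 1 ∧
      tvDist (isoGaussian n x σ) (isoGaussian n x' σ) =
        erf (Real.sqrt (∑ j, (x j - x' j) ^ 2) / (2 * Real.sqrt 2 * σ)) :=
  tvDist_isoGaussian_general n σ hσ x x'
end
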